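/- In a finite discounted MDP, suppose for every state s the policies π_{k+1} and π_k satisfy η·( E_{a∼π_{k+1}(·|s)}[Q^{π_k}(s,a)] − E_{a∼π_k(·|s)}[Q^{π_k}(s,a)] ) ≥ KL(π_{k+1}(·|s) ‖ π_k(·|s)) for some η > 0. Then V_ρ(π_{k+1}) ≥ V_ρ(π_k) for every initial distribution ρ. -/
import Mathlib


open Finset

section MDP

variable {S A : Type*} [Fintype S] [Fintype A] [DecidableEq S]

/-- Kullback–Leibler divergence on a finite set. -/
noncomputable def KL {X : Type*} [Fintype X] (p q : X → ℝ) : ℝ :=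
  ∑ x, p x * Real.log (p x / q x)

/-- The state-transition matrix induced by a policy. -/
noncomputable def policyMatrix (P : S → A → S → ℝ) (π : S → A → ℝ) : Matrix S S ℝ :=
  fun s s' => ∑ a, π s a * P s a s'

/-- Expected one-step reward under policy `π`. -/
noncomputable def rewardVec (r : S → A → ℝ) (π : S → A → ℝ) : S → ℝ :=
  fun s => ∑ a, π s a * r s a

/-- The state value function `V^π`. -/
noncomputable def Vval (γ : ℝ) (P : S → A → S → ℝ) (r : S → A → ℝ) (π : S → A → ℝ) :
    S → ℝ :=
  fun s => ∑' t : ℕ, γ ^ t * ((policyMatrix P π ^ t).mulVec (rewardVec r π)) s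

/-- The state-action value function `Q^π`. -/
noncomputable def Qval (γ : ℝ) (P : S → A → S → ℝ) (r : S → A → ℝ) (π : S → A → ℝ) :
    S → A → ℝ :=
  fun s a => r s a + γ * ∑ s', P s a s' * Vval γ P r π s'

/-- `P` is a transition kernel. -/
def IsKernel (P : S → A → S → ℝ) : Prop :=
  ∀ s a, (∀ s', 0 ≤ P s a s') ∧ ∑ s', P s a s' = 1

/-- `π` is a stationary policy. -/
def IsPolicy (π : S → A → ℝ) : Prop :=
  ∀ s, (∀ a, 0 ≤ π s a) ∧ ∑ a, π s a = 1

end MDP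


/-- Gibbs: KL is nonnegative for probability vectors with positive reference. -/
lemma KL_nonneg' {X : Type*} [Fintype X] (p q : X → ℝ)
    (hp : ∀ x, 0 ≤ p x) (hq : ∀ x, 0 < q x)
    (hps : ∑ x, p x = 1) (hqs : ∑ x, q x = 1) :
    0 ≤ ∑ x, p x * Real.log (p x / q x) := by
  have key : ∀ x : X, p x - q x ≤ p x * Real.log (p x / q x) := by
    intro x
    rcases eq_or_lt_of_le (hp x) with h | h
    · rw [← h]; simp; linarith [(hq x).le]
    · have h1 : Real.log (q x / p x) ≤ q x / p x - 1 :=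
        Real.log_le_sub_one_of_pos (div_pos (hq x) h)
      have h2 : Real.log (p x / q x) = - Real.log (q x / p x) := by
        rw [Real.log_div h.ne' (hq x).ne', Real.log_div (hq x).ne' h.ne']; ring
      have h5 : p x * Real.log (q x / p x) ≤ p x * (q x / p x - 1) :=
        mul_le_mul_of_nonneg_left h1 h.le
      have h3 : p x * (q x / p x - 1) = q x - p x := by field_simp
      rw [h2]; nlinarith
  calc (0:ℝ) = ∑ x, (p x - q x) := by rw [Finset.sum_sub_distrib, hps, hqs]; ring
  _ ≤ _ := Finset.sum_le_sum (fun x _ => key x)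

/-- Powers of a row-stochastic matrix are row-stochastic. -/
lemma stoch_pow {S : Type*} [Fintype S] [DecidableEq S] (M : Matrix S S ℝ)
    (h0 : ∀ i j, 0 ≤ M i j) (h1 : ∀ i, ∑ j, M i j = 1) (t : ℕ) :
    (∀ i j, 0 ≤ (M ^ t) i j) ∧ ∀ i, ∑ j, (M ^ t) i j = 1 := by
  induction t with
  | zero =>
    constructor
    · intro i j; simp [Matrix.one_apply]; split <;> norm_num
    · intro i; simp [Matrix.one_apply]
  | succ t ih =>
    rw [pow_succ]
    constructor
    · intro i j
      rw [Matrix.mul_apply]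
      exact Finset.sum_nonneg fun k _ => mul_nonneg (ih.1 i k) (h0 k j)
    · intro i
      simp only [Matrix.mul_apply]
      rw [Finset.sum_comm]
      calc ∑ k, ∑ j, (M ^ t) i k * M k j = ∑ k, (M ^ t) i k * ∑ j, M k j := by
            simp [Finset.mul_sum]
        _ = 1 := by simp [h1, ih.2 i]

lemma mulVec_bound {S : Type*} [Fintype S] [DecidableEq S] (M : Matrix S S ℝ)
    (h0 : ∀ i j, 0 ≤ M i j) (h1 : ∀ i, ∑ j, M i j = 1) (v : S → ℝ) (C : ℝ)
    (hv : ∀ s, |v s| ≤ C) (s : S) : |M.mulVec v s| ≤ C := by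
  have hC : 0 ≤ C := le_trans (abs_nonneg _) (hv s)
  calc |M.mulVec v s| = |∑ j, M s j * v j| := by rfl
    _ ≤ ∑ j, |M s j * v j| := Finset.abs_sum_le_sum_abs _ _
    _ ≤ ∑ j, M s j * C := by
        apply Finset.sum_le_sum; intro j _
        rw [abs_mul, abs_of_nonneg (h0 s j)]
        exact mul_le_mul_of_nonneg_left (hv j) (h0 s j)
    _ = C := by rw [← Finset.sum_mul, h1 s, one_mul]

lemma summable_V {S : Type*} [Fintype S] [DecidableEq S] (γ : ℝ)
    (hγ0 : 0 ≤ γ) (hγ1 : γ < 1) (M : Matrix S S ℝ)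
    (h0 : ∀ i j, 0 ≤ M i j) (h1 : ∀ i, ∑ j, M i j = 1) (R : S → ℝ) (s : S) :
    Summable (fun t : ℕ => γ ^ t * ((M ^ t).mulVec R) s) := by
  set C : ℝ := ∑ s', |R s'| with hC
  have hRC : ∀ s', |R s'| ≤ C := fun s' =>
    Finset.single_le_sum (f := fun x => |R x|) (fun x _ => abs_nonneg _) (Finset.mem_univ s')
  apply Summable.of_norm_bounded (g := fun t => C * γ ^ t)
    ((summable_geometric_of_lt_one hγ0 hγ1).mul_left C)
  intro t
  rw [Real.norm_eq_abs, abs_mul, abs_of_nonneg (pow_nonneg hγ0 t), mul_comm]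
  apply mul_le_mul_of_nonneg_right _ (pow_nonneg hγ0 t)
  exact mulVec_bound _ (stoch_pow M h0 h1 t).1 (stoch_pow M h0 h1 t).2 R C hRC s

lemma bellman {S : Type*} [Fintype S] [DecidableEq S] (γ : ℝ)
    (hγ0 : 0 ≤ γ) (hγ1 : γ < 1) (M : Matrix S S ℝ)
    (h0 : ∀ i j, 0 ≤ M i j) (h1 : ∀ i, ∑ j, M i j = 1) (R : S → ℝ) (s : S) :
    (∑' t : ℕ, γ ^ t * ((M ^ t).mulVec R) s)
      = R s + γ * ∑ s', M s s' * (∑' t : ℕ, γ ^ t * ((M ^ t).mulVec R) s') := by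
  have hsum := summable_V γ hγ0 hγ1 M h0 h1 R
  rw [Summable.tsum_eq_zero_add (hsum s)]
  have h00 : γ ^ 0 * ((M ^ 0).mulVec R) s = R s := by
    simp [Matrix.one_mulVec]
  have step : ∀ t : ℕ, γ ^ (t+1) * ((M ^ (t+1)).mulVec R) s
      = γ * ∑ s', M s s' * (γ ^ t * ((M ^ t).mulVec R) s') := by
    intro t
    rw [pow_succ' M t, ← Matrix.mulVec_mulVec]
    unfold Matrix.mulVec dotProduct
    rw [Finset.mul_sum, Finset.mul_sum]
    refine Finset.sum_congr rfl fun s' _ => by ring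
  rw [h00]
  congr 1
  simp_rw [step]
  rw [tsum_mul_left]
  congr 1
  rw [Summable.tsum_finsetSum (fun s' _ => ((hsum s').mul_left (M s s')))]
  refine Finset.sum_congr rfl fun s' _ => ?_
  rw [tsum_mul_left]

/-- If at every state the improvement in expected `Q^{π_k}` value from `π_k` to `π_{k+1}`
is at least `(1/η) KL(π_{k+1}(·|s) ‖ π_k(·|s))`, then `V_ρ(π_{k+1}) ≥ V_ρ(π_k)` for every
initial distribution `ρ`. -/
theorem kl_regularized_improvement
    {S A : Type*} [Fintype S] [Fintype A] [DecidableEq S]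
    (γ : ℝ) (hγ : 0 ≤ γ ∧ γ < 1)
    (P : S → A → S → ℝ) (hP : IsKernel P)
    (r : S → A → ℝ)
    (πk πk1 : S → A → ℝ) (hπk : IsPolicy πk) (hπk1 : IsPolicy πk1)
    (hπkfull : ∀ s a, 0 < πk s a)
    (η : ℝ) (hη : 0 < η)
    (himp : ∀ s,
      KL (πk1 s) (πk s) ≤
        η * ((∑ a, πk1 s a * Qval γ P r πk s a) - ∑ a, πk s a * Qval γ P r πk s a)) :
    ∀ ρ : S → ℝ, (∀ s, 0 ≤ ρ s) → (∑ s, ρ s = 1) →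
      (∑ s, ρ s * Vval γ P r πk s) ≤ ∑ s, ρ s * Vval γ P r πk1 s := by
  obtain ⟨hγ0, hγ1⟩ := hγ
  -- stochasticity of the policy matrices
  have hMstoch : ∀ (π : S → A → ℝ), IsPolicy π →
      (∀ s s', 0 ≤ policyMatrix P π s s') ∧ (∀ s, ∑ s', policyMatrix P π s s' = 1) := by
    intro π hπ
    constructor
    · intro s s'
      exact Finset.sum_nonneg fun a _ => mul_nonneg ((hπ s).1 a) ((hP s a).1 s')
    · intro s
      unfold policyMatrix
      rw [Finset.sum_comm]
      calc ∑ a, ∑ s', π s a * P s a s' = ∑ a, π s a * ∑ s', P s a s' := by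
            simp [Finset.mul_sum]
        _ = 1 := by
            simp only [fun a => (hP s a).2]
            simpa using (hπ s).2
  have hbell : ∀ (π : S → A → ℝ), IsPolicy π → ∀ s,
      Vval γ P r π s = rewardVec r π s
        + γ * ∑ s', policyMatrix P π s s' * Vval γ P r π s' := by
    intro π hπ s
    simp only [Vval]
    exact bellman γ hγ0 hγ1 (policyMatrix P π) (hMstoch π hπ).1 (hMstoch π hπ).2
      (rewardVec r π) s
  -- expansion of expected Q value
  have hexpQ : ∀ (w : A → ℝ) (s : S),
      ∑ a, w a * Qval γ P r πk s a
        = (∑ a, w a * r s a)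
          + γ * ∑ s', (∑ a, w a * P s a s') * Vval γ P r πk s' := by
    intro w s
    simp only [Qval]
    simp_rw [mul_add, Finset.sum_add_distrib]
    congr 1
    have h1 : ∀ a, w a * (γ * ∑ s', P s a s' * Vval γ P r πk s')
        = γ * ∑ s', w a * P s a s' * Vval γ P r πk s' := by
      intro a
      rw [Finset.mul_sum, Finset.mul_sum, Finset.mul_sum]
      exact Finset.sum_congr rfl fun s' _ => by ring
    simp_rw [h1]
    rw [← Finset.mul_sum, Finset.sum_comm]
    congr 1
    exact Finset.sum_congr rfl fun s' _ => by rw [Finset.sum_mul]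
  set V0 := Vval γ P r πk with hV0
  set V1 := Vval γ P r πk1 with hV1
  -- at every state, the expected Q-improvement is nonnegative
  have hE : ∀ s, ∑ a, πk s a * Qval γ P r πk s a ≤ ∑ a, πk1 s a * Qval γ P r πk s a := by
    intro s
    have hKL : 0 ≤ KL (πk1 s) (πk s) := by
      unfold KL
      exact KL_nonneg' (πk1 s) (πk s) (hπk1 s).1 (hπkfull s) (hπk1 s).2 (hπk s).2
    have := himp s
    nlinarith
  -- key pointwise inequality : V0 ≤ R1 + γ M1 V0
  have hkey : ∀ s, V0 s ≤ rewardVec r πk1 s + γ * ∑ s', policyMatrix P πk1 s s' * V0 s' := by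
    intro s
    have e0 : ∑ a, πk s a * Qval γ P r πk s a = V0 s := by
      rw [hexpQ (πk s) s, hV0, hbell πk hπk s]
      rfl
    have e1 : ∑ a, πk1 s a * Qval γ P r πk s a
        = rewardVec r πk1 s + γ * ∑ s', policyMatrix P πk1 s s' * V0 s' := by
      rw [hexpQ (πk1 s) s]
      rfl
    have := hE s
    rw [e0, e1] at this
    exact this
  -- pointwise improvement via a minimum argument
  have hpt : ∀ s, V0 s ≤ V1 s := by
    intro s
    have hne : (Finset.univ : Finset S).Nonempty := ⟨s, Finset.mem_univ s⟩
    obtain ⟨s0, -, hs0⟩ := Finset.exists_min_image Finset.univ (fun x => V1 x - V0 x) hne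
    have hs0' : ∀ x, V1 s0 - V0 s0 ≤ V1 x - V0 x := fun x => hs0 x (Finset.mem_univ x)
    set d := V1 s0 - V0 s0 with hd
    have hb1 := hbell πk1 hπk1 s0
    have hk1 := hkey s0
    -- V1 s0 - V0 s0 ≥ γ * ∑ M1 s0 s' * (V1 s' - V0 s')
    have hsub : γ * ∑ s', policyMatrix P πk1 s0 s' * (V1 s' - V0 s') ≤ d := by
      have hdiff : ∑ s', policyMatrix P πk1 s0 s' * (V1 s' - V0 s')
          = (∑ s', policyMatrix P πk1 s0 s' * V1 s')
            - ∑ s', policyMatrix P πk1 s0 s' * V0 s' := by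
        rw [← Finset.sum_sub_distrib]
        exact Finset.sum_congr rfl fun s' _ => by ring
      rw [hdiff, mul_sub]
      have : V1 s0 = rewardVec r πk1 s0 + γ * ∑ s', policyMatrix P πk1 s0 s' * V1 s' := hb1
      simp only [hd]
      linarith
    have hlow : d ≤ ∑ s', policyMatrix P πk1 s0 s' * (V1 s' - V0 s') := by
      calc d = ∑ s', policyMatrix P πk1 s0 s' * d := by
            rw [← Finset.sum_mul, (hMstoch πk1 hπk1).2 s0, one_mul]
        _ ≤ _ := Finset.sum_le_sum fun s' _ =>
            mul_le_mul_of_nonneg_left (hs0' s') ((hMstoch πk1 hπk1).1 s0 s')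
    have hγd : γ * d ≤ γ * ∑ s', policyMatrix P πk1 s0 s' * (V1 s' - V0 s') :=
      mul_le_mul_of_nonneg_left hlow hγ0
    have hd0 : 0 ≤ d := by nlinarith
    have := hs0' s
    linarith
  intro ρ hρ0 _
  exact Finset.sum_le_sum fun s _ => mul_le_mul_of_nonneg_left (hpt s) (hρ0 s)
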